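/- arXiv:2204.05100 — 3 statements merged into one kernel-verified Lean document; each statement's English description precedes it below -/
import Mathlib

section
/- Let ζ be a primitive 14th root of unity in ℂ. Suppose rational numbers m₁,…,m₆ and α satisfy m₁ = 4*α - 2*m₄ + m₅, m₂ = 1 - 2*m₅ + 3*m₄, and m₆ = 8*m₄ + 4 - 2*m₃ - 2*α - 4*m₅. Then the holomorphic Lefschetz identity holds: 1 + ζ^13 = Σ_{i=1}^{6} m_i / ((1 - ζ^{1+i})*(1 - ζ^{14-i})) + α*(1 + ζ)/(1 - ζ)². -/
/-!
A primitive 14th root of unity `ζ` is a root of `Φ₁₄ = X⁶ - X⁵ + X⁴ - X³ + X² - X + 1`, so every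
element of `ℚ(ζ)` is a unique `ℚ`-combination of `1, ζ, …, ζ⁵`. Inverting each denominator modulo
`Φ₁₄` puts every term of the right-hand side in this form; once `m₁`, `m₂`, `m₆` are eliminated,
both sides have the same coordinates.
-/

open Finset

theorem IsPrimitiveRoot.geom_sum_neg_eq_zero {R : Type*} [CommRing R] [IsDomain R] {ζ : R}
    {n : ℕ} (hζ : IsPrimitiveRoot ζ (2 * n)) (hn : Odd n) (h1 : 1 < n) :
    ∑ i ∈ range n, (-ζ) ^ i = 0 := by
  have hpow : ζ ^ n = -1 :=
    (hζ.pow (by omega) (mul_comm 2 n)).eq_neg_one_of_two_right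
  have hne : -ζ - 1 ≠ 0 := by
    intro h
    refine hζ.pow_ne_one_of_pos_of_lt two_ne_zero (by omega) ?_
    rw [show ζ = -1 by linear_combination -h]
    norm_num
  refine (mul_eq_zero.1 ?_).resolve_right hne
  rw [geom_sum_mul, hn.neg_pow, hpow]
  ring

theorem IsPrimitiveRoot.cyclotomic_fourteen_eq_zero {R : Type*} [CommRing R] [IsDomain R]
    {ζ : R} (hζ : IsPrimitiveRoot ζ 14) :
    ζ ^ 6 - ζ ^ 5 + ζ ^ 4 - ζ ^ 3 + ζ ^ 2 - ζ + 1 = 0 := by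
  have h := IsPrimitiveRoot.geom_sum_neg_eq_zero (n := 7) hζ (by decide) (by norm_num)
  simp only [sum_range_succ, sum_range_zero] at h
  linear_combination h

namespace Cyclotomic14

variable {K : Type*} [Field K] [CharZero K] {ζ : K}

theorem inv_one_sub_sq
    (hΦ : ζ ^ 6 - ζ ^ 5 + ζ ^ 4 - ζ ^ 3 + ζ ^ 2 - ζ + 1 = 0) :
    ((1 - ζ) ^ 2)⁻¹ = -3 + ζ - 2 * ζ ^ 2 + 2 * ζ ^ 3 - ζ ^ 4 + 3 * ζ ^ 5 :=
  inv_eq_of_mul_eq_one_right (by grind)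

theorem inv_one_sub_pow_two_mul_one_sub_pow_thirteen
    (hΦ : ζ ^ 6 - ζ ^ 5 + ζ ^ 4 - ζ ^ 3 + ζ ^ 2 - ζ + 1 = 0) :
    ((1 - ζ ^ 2) * (1 - ζ ^ 13))⁻¹ =
      12 / 7 - 3 / 7 * ζ + 8 / 7 * ζ ^ 2 - 6 / 7 * ζ ^ 3 + 4 / 7 * ζ ^ 4 - 9 / 7 * ζ ^ 5 :=
  inv_eq_of_mul_eq_one_right (by grind)

theorem inv_one_sub_pow_three_mul_one_sub_pow_twelve
    (hΦ : ζ ^ 6 - ζ ^ 5 + ζ ^ 4 - ζ ^ 3 + ζ ^ 2 - ζ + 1 = 0) :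
    ((1 - ζ ^ 3) * (1 - ζ ^ 12))⁻¹ =
      2 / 7 + 3 / 7 * ζ - 1 / 7 * ζ ^ 2 - 1 / 7 * ζ ^ 3 + 3 / 7 * ζ ^ 4 - 5 / 7 * ζ ^ 5 :=
  inv_eq_of_mul_eq_one_right (by grind)

theorem inv_one_sub_pow_four_mul_one_sub_pow_eleven
    (hΦ : ζ ^ 6 - ζ ^ 5 + ζ ^ 4 - ζ ^ 3 + ζ ^ 2 - ζ + 1 = 0) :
    ((1 - ζ ^ 4) * (1 - ζ ^ 11))⁻¹ =
      6 / 7 - 5 / 7 * ζ + 4 / 7 * ζ ^ 2 - 3 / 7 * ζ ^ 3 + 2 / 7 * ζ ^ 4 - 1 / 7 * ζ ^ 5 :=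
  inv_eq_of_mul_eq_one_right (by grind)

theorem inv_one_sub_pow_five_mul_one_sub_pow_ten
    (hΦ : ζ ^ 6 - ζ ^ 5 + ζ ^ 4 - ζ ^ 3 + ζ ^ 2 - ζ + 1 = 0) :
    ((1 - ζ ^ 5) * (1 - ζ ^ 10))⁻¹ =
      -6 / 7 + 5 / 7 * ζ + 3 / 7 * ζ ^ 2 + 3 / 7 * ζ ^ 3 - 9 / 7 * ζ ^ 4 + 1 / 7 * ζ ^ 5 :=
  inv_eq_of_mul_eq_one_right (by grind)

theorem inv_one_sub_pow_six_mul_one_sub_pow_nine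
    (hΦ : ζ ^ 6 - ζ ^ 5 + ζ ^ 4 - ζ ^ 3 + ζ ^ 2 - ζ + 1 = 0) :
    ((1 - ζ ^ 6) * (1 - ζ ^ 9))⁻¹ =
      4 / 7 - 1 / 7 * ζ - 2 / 7 * ζ ^ 2 - 2 / 7 * ζ ^ 3 + 6 / 7 * ζ ^ 4 - 3 / 7 * ζ ^ 5 :=
  inv_eq_of_mul_eq_one_right (by grind)

theorem inv_one_sub_pow_seven_mul_one_sub_pow_eight
    (hΦ : ζ ^ 6 - ζ ^ 5 + ζ ^ 4 - ζ ^ 3 + ζ ^ 2 - ζ + 1 = 0) :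
    ((1 - ζ ^ 7) * (1 - ζ ^ 8))⁻¹ =
      3 / 7 - 5 / 14 * ζ + 2 / 7 * ζ ^ 2 - 3 / 14 * ζ ^ 3 + 1 / 7 * ζ ^ 4 - 1 / 14 * ζ ^ 5 :=
  inv_eq_of_mul_eq_one_right (by grind)

end Cyclotomic14

open Cyclotomic14

theorem holomorphic_lefschetz_order_14 (ζ : ℂ) (hζ : IsPrimitiveRoot ζ 14)
    (m₁ m₂ m₃ m₄ m₅ m₆ α : ℚ)
    (h1 : m₁ = 4 * α - 2 * m₄ + m₅)
    (h2 : m₂ = 1 - 2 * m₅ + 3 * m₄)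
    (h3 : m₆ = 8 * m₄ + 4 - 2 * m₃ - 2 * α - 4 * m₅) :
    1 + ζ ^ 13 =
      (m₁ : ℂ) / ((1 - ζ ^ 2) * (1 - ζ ^ 13))
      + (m₂ : ℂ) / ((1 - ζ ^ 3) * (1 - ζ ^ 12))
      + (m₃ : ℂ) / ((1 - ζ ^ 4) * (1 - ζ ^ 11))
      + (m₄ : ℂ) / ((1 - ζ ^ 5) * (1 - ζ ^ 10))
      + (m₅ : ℂ) / ((1 - ζ ^ 6) * (1 - ζ ^ 9))
      + (m₆ : ℂ) / ((1 - ζ ^ 7) * (1 - ζ ^ 8))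
      + (α : ℂ) * (1 + ζ) / (1 - ζ) ^ 2 := by
  have hΦ := hζ.cyclotomic_fourteen_eq_zero
  subst h1 h2 h3
  simp only [div_eq_mul_inv, inv_one_sub_pow_two_mul_one_sub_pow_thirteen hΦ,
    inv_one_sub_pow_three_mul_one_sub_pow_twelve hΦ, inv_one_sub_pow_four_mul_one_sub_pow_eleven hΦ,
    inv_one_sub_pow_five_mul_one_sub_pow_ten hΦ, inv_one_sub_pow_six_mul_one_sub_pow_nine hΦ,
    inv_one_sub_pow_seven_mul_one_sub_pow_eight hΦ, inv_one_sub_sq hΦ]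
  push_cast
  -- the multiplier reduces `ζ ^ 13` and the `3 α ζ ^ 6` of the `α`-term modulo `Φ₁₄`
  linear_combination (ζ ^ 7 + ζ ^ 6 - 1 - 3 * (α : ℂ)) * hΦ
end

section
/- There is no tuple (d₂₁, d₇, d₃, d₁, N₃) of nonnegative integers satisfying all of: d₃ ≥ 1, d₁ ≥ 1, d₃ + d₁ = 4, d₂₁ + d₇ = 3, 2 - (2*d₂₁ + d₇) + 2*d₃ + d₁ = 3, and 2 - 6*(d₂₁ - d₇) - d₃ + d₁ = 3*N₃ - 6. (Consequently, for a non-symplectic automorphism of order 21 on a K3 surface, the power of order 7 cannot be symplectic.) -/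
theorem order_21_cube_not_symplectic :
    ¬ ∃ d21 d7 d3 d1 N3 : ℕ,
      1 ≤ d3 ∧ 1 ≤ d1 ∧ d3 + d1 = 4 ∧ d21 + d7 = 3 ∧
      (2 : ℤ) - (2 * d21 + d7) + 2 * d3 + d1 = 3 ∧
      (2 : ℤ) - 6 * ((d21 : ℤ) - d7) - d3 + d1 = 3 * N3 - 6 := by
  rintro ⟨d21, d7, d3, d1, N3, h3, h1, hs, ht, e1, e2⟩
  have hd21 : d21 = d3 := by omega
  -- 3 ∣ 14 * d3 forces d3 = 3, and then 3 * N3 = -12.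
  have hN3 : 3 * N3 + 14 * d3 = 30 := by omega
  omega
end

section
/- The unique tuple (d₂₈, d₁₄, d₇, d₄, d₂, d₁) of nonnegative integers satisfying 6*d₇ + d₁ = 8, 12*d₂₈ + 6*d₁₄ + 2*d₄ + d₂ = 14, d₇ ≥ 1, and 2 + d₁₄ - d₇ - d₂ + d₁ = 4, is (0, 1, 1, 4, 0, 2); and for this tuple the quantity 2 + 2*d₂₈ - d₁₄ - d₇ - 2*d₄ + d₂ + d₁ equals -6. (Since the Euler characteristic of the fixed locus of a non-symplectic order-14 automorphism is positive, a non-symplectic order-28 automorphism on a K3 surface cannot have symplectic 7th power.) -/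
theorem order_28_fourth_power_symplectic_case :
    (∀ d28 d14 d7 d4 d2 d1 : ℕ,
      (6 * d7 + d1 = 8 ∧ 12 * d28 + 6 * d14 + 2 * d4 + d2 = 14 ∧ 1 ≤ d7 ∧
        (2 : ℤ) + d14 - d7 - d2 + d1 = 4) ↔
      (d28, d14, d7, d4, d2, d1) = (0, 1, 1, 4, 0, 2)) ∧
    (2 : ℤ) + 2 * 0 - 1 - 1 - 2 * 4 + 0 + 2 = -6 := by
  refine ⟨fun d28 d14 d7 d4 d2 d1 => ?_, by norm_num⟩
  simp only [Prod.mk.injEq]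
  -- d7 = 1 and d1 = 2 force d14 = d2 + 1, leaving 12 d28 + 7 d2 + 2 d4 = 8 with d2 even.
  omega
end
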